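/- arXiv:1610.09052 — 7 statements merged into one kernel-verified Lean document; each statement's English description precedes it below -/
import Mathlib

section
/- (Kadison) Let H be a complex Hilbert space and let A, B be bounded self-adjoint operators on H. If A and B possess a minimum in B^ℝ(H) — that is, a bounded self-adjoint operator C with C ≤ A, C ≤ B, and such that every bounded self-adjoint X with X ≤ A and X ≤ B satisfies X ≤ C — then A ≤ B or B ≤ A. In other words, B^ℝ(H) is an anti-lattice. -/
/-!
If `A` and `B` are incomparable, neither `A - C` nor `B - C` vanishes, so each dominates a
rank-one operator: `|u⟩⟨u| ≤ A - C` and `|v⟩⟨v| ≤ B - C`. After rescaling `u` and `v` to equal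
norms with `⟪u, v⟫ ≥ 0`, the operator `X = √2 (|u⟩⟨v| + |v⟩⟨u|) - |u⟩⟨u| - |v⟩⟨v|` lies below
both `|u⟩⟨u|` and `|v⟩⟨v|` (the differences are `|w⟩⟨w|` for `w = √2 u - v` and `w = √2 v - u`),
yet `u + v` is an eigenvector of `X` with positive eigenvalue. So `C + X` is a lower bound of
`A` and `B` that is not below `C`.
-/

open scoped InnerProductSpace ComplexOrder
open InnerProductSpace ContinuousLinearMap

section RCLike

variable {𝕜 E : Type*} [RCLike 𝕜] [NormedAddCommGroup E] [InnerProductSpace 𝕜 E]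

lemma rankOne_smul_smul_self (c : 𝕜) (u : E) :
    rankOne 𝕜 (c • u) (c • u) = ((‖c‖ : 𝕜) ^ 2) • rankOne 𝕜 u u := by
  simp [smul_smul, RCLike.mul_conj]

lemma rankOne_smul_smul_self_le {c : 𝕜} (hc : ‖c‖ ≤ 1) (u : E) :
    rankOne 𝕜 (c • u) (c • u) ≤ rankOne 𝕜 u u := by
  have hc' : (0 : 𝕜) ≤ 1 - (‖c‖ : 𝕜) ^ 2 := by
    rw [← RCLike.ofReal_pow, ← RCLike.ofReal_one, ← RCLike.ofReal_sub, RCLike.ofReal_nonneg]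
    nlinarith [norm_nonneg c]
  rw [le_def, rankOne_smul_smul_self]
  simpa only [sub_smul, one_smul] using (isPositive_rankOne_self u).smul_of_nonneg hc'

end RCLike

section Complex

variable {H : Type*} [NormedAddCommGroup H] [InnerProductSpace ℂ H]

lemma exists_rankOne_self_le [CompleteSpace H] {T : H →L[ℂ] H} (hT : 0 ≤ T) (hT0 : T ≠ 0) :
    ∃ u ≠ 0, rankOne ℂ u u ≤ T := by
  obtain ⟨b, rfl⟩ := CStarAlgebra.nonneg_iff_eq_star_mul_self.mp hT
  obtain ⟨y, hy⟩ : ∃ y, star b y ≠ 0 := by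
    by_contra! h
    exact hT0 (by simp [show star b = 0 from ext h])
  have hy0 : y ≠ 0 := fun h => hy (by simp [h])
  set e : H := (‖y‖ : ℂ)⁻¹ • y
  refine ⟨star b e, by simpa [e, hy0] using hy, ?_⟩
  have he : ‖e‖ = 1 := norm_smul_inv_norm hy0
  calc rankOne ℂ (star b e) (star b e) = star b * rankOne ℂ e e * b := by
        rw [mul_def, mul_def, comp_rankOne, rankOne_comp, star_eq_adjoint]
    _ ≤ star b * 1 * b :=
        star_left_conjugate_le_conjugate (isStarProjection_rankOne_self he).le_one b
    _ = star b * b := by rw [mul_one]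

lemma not_le_zero_of_apply_eq_smul {X : H →L[ℂ] H} {x : H} (hx : x ≠ 0) {μ : ℝ} (hμ : 0 < μ)
    (hX : X x = (μ : ℂ) • x) : ¬ X ≤ 0 := by
  intro hle
  have h := ((le_def X 0).mp hle).re_inner_nonneg_left x
  rw [zero_sub, neg_apply, hX, inner_neg_left, inner_smul_left, Complex.conj_ofReal, map_neg,
    RCLike.re_to_complex, Complex.re_ofReal_mul, ← RCLike.re_to_complex, inner_self_eq_norm_sq]
    at h
  linarith [mul_pos hμ (pow_pos (norm_pos_iff.mpr hx) 2)]

noncomputable def kadisonWitness (u v : H) : H →L[ℂ] H :=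
  (√2 : ℂ) • (rankOne ℂ u v + rankOne ℂ v u) - rankOne ℂ u u - rankOne ℂ v v

lemma kadisonWitness_comm (u v : H) : kadisonWitness u v = kadisonWitness v u := by
  rw [kadisonWitness, kadisonWitness, add_comm (rankOne ℂ u v)]
  abel

lemma rankOne_self_sub_kadisonWitness (u v : H) :
    rankOne ℂ u u - kadisonWitness u v = rankOne ℂ ((√2 : ℂ) • u - v) ((√2 : ℂ) • u - v) := by
  simp only [kadisonWitness, map_sub, map_smul, map_smulₛₗ, sub_apply, smul_apply, smul_sub,
    smul_smul, Complex.conj_ofReal]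
  match_scalars <;> norm_num [← Complex.ofReal_mul]

lemma kadisonWitness_apply_add {u v : H} (huv : ‖u‖ = ‖v‖) {r : ℝ} (h : ⟪u, v⟫_ℂ = r) :
    kadisonWitness u v (u + v) = (((√2 - 1) * (‖u‖ ^ 2 + r) : ℝ) : ℂ) • (u + v) := by
  have h' : ⟪v, u⟫_ℂ = r := by rw [← inner_conj_symm, h, Complex.conj_ofReal]
  simp only [kadisonWitness, sub_apply, smul_apply, add_apply, rankOne_apply, inner_add_right,
    inner_self_eq_norm_sq_to_K, h, h', ← huv]
  push_cast
  module

lemma kadisonWitness_le_rankOne_self_left (u v : H) :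
    kadisonWitness u v ≤ rankOne ℂ u u := by
  rw [le_def, rankOne_self_sub_kadisonWitness]
  exact isPositive_rankOne_self _

lemma kadisonWitness_le_rankOne_self_right (u v : H) :
    kadisonWitness u v ≤ rankOne ℂ v v :=
  kadisonWitness_comm u v ▸ kadisonWitness_le_rankOne_self_left v u

lemma kadisonWitness_not_le_zero {u v : H} (hu : u ≠ 0) (huv : ‖u‖ = ‖v‖) {r : ℝ} (hr : 0 ≤ r)
    (h : ⟪u, v⟫_ℂ = r) : ¬ kadisonWitness u v ≤ 0 := by
  have hs : 0 < ‖u‖ ^ 2 + r := by have := norm_pos_iff.mpr hu; positivity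
  refine not_le_zero_of_apply_eq_smul ?_ (mul_pos (sub_pos.mpr Real.one_lt_sqrt_two) hs)
    (kadisonWitness_apply_add huv h)
  intro h0
  have hre : RCLike.re ⟪u, u + v⟫_ℂ = ‖u‖ ^ 2 + r := by
    rw [inner_add_right, map_add, inner_self_eq_norm_sq, h, RCLike.re_to_complex, Complex.ofReal_re]
  rw [h0, inner_zero_right, map_zero] at hre
  linarith

lemma exists_le_rankOne_self_not_le_zero {u v : H} (hu : u ≠ 0) (hv : v ≠ 0) :
    ∃ X : H →L[ℂ] H, X ≤ rankOne ℂ u u ∧ X ≤ rankOne ℂ v v ∧ ¬ X ≤ 0 := by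
  set z := ⟪u, v⟫_ℂ
  set s := ‖u‖ + ‖v‖
  have hs : 0 < s := by have := norm_pos_iff.mpr hu; positivity
  have hz : Complex.exp (-(z.arg : ℂ) * Complex.I) * z = ‖z‖ := by
    nth_rw 2 [← Complex.norm_mul_exp_arg_mul_I z]
    rw [mul_left_comm, ← Complex.exp_add]
    simp
  -- `a • u` and `b • v` both have norm `‖u‖ ‖v‖ / s`, and the phase of `b` makes their inner
  -- product real and nonnegative.
  set a : ℂ := ((‖v‖ / s : ℝ) : ℂ)
  set b : ℂ := ((‖u‖ / s : ℝ) : ℂ) * Complex.exp (-(z.arg : ℂ) * Complex.I)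
  have ha : ‖a‖ ≤ 1 := by
    rw [Complex.norm_real, Real.norm_of_nonneg (by positivity), div_le_one hs]
    linarith [norm_nonneg u]
  have hb : ‖b‖ ≤ 1 := by
    rw [norm_mul, ← Complex.ofReal_neg, Complex.norm_exp_ofReal_mul_I, mul_one, Complex.norm_real,
      Real.norm_of_nonneg (by positivity), div_le_one hs]
    linarith [norm_nonneg v]
  refine ⟨kadisonWitness (a • u) (b • v),
    (kadisonWitness_le_rankOne_self_left _ _).trans (rankOne_smul_smul_self_le ha u),
    (kadisonWitness_le_rankOne_self_right _ _).trans (rankOne_smul_smul_self_le hb v),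
    kadisonWitness_not_le_zero (r := ‖v‖ / s * (‖u‖ / s) * ‖z‖) ?_ ?_ (by positivity) ?_⟩
  · exact smul_ne_zero (by simpa [a] using (div_pos (norm_pos_iff.mpr hv) hs).ne') hu
  · rw [norm_smul, norm_smul, norm_mul, ← Complex.ofReal_neg, Complex.norm_exp_ofReal_mul_I]
    simp only [Complex.norm_real, Real.norm_of_nonneg (div_nonneg (norm_nonneg _) hs.le), a]
    ring
  · rw [inner_smul_left, inner_smul_right, Complex.conj_ofReal, mul_assoc, hz]
    push_cast
    ring

end Complex

theorem stmt4_general (H : Type*) [NormedAddCommGroup H] [InnerProductSpace ℂ H] [CompleteSpace H]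
    (A B C : H →L[ℂ] H)
    (hC : IsSelfAdjoint C)
    (hCA : (A - C).IsPositive) (hCB : (B - C).IsPositive)
    (hmin : ∀ X : H →L[ℂ] H, IsSelfAdjoint X →
      (A - X).IsPositive → (B - X).IsPositive → (C - X).IsPositive) :
    (B - A).IsPositive ∨ (A - B).IsPositive := by
  by_contra! ⟨hAB, hBA⟩
  obtain ⟨u, hu, huA⟩ := exists_rankOne_self_le ((nonneg_iff_isPositive _).mpr hCA)
    (sub_ne_zero.mpr fun hAC => hAB (hAC ▸ hCB))
  obtain ⟨v, hv, hvB⟩ := exists_rankOne_self_le ((nonneg_iff_isPositive _).mpr hCB)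
    (sub_ne_zero.mpr fun hBC => hBA (hBC ▸ hCA))
  obtain ⟨X, hXu, hXv, hX⟩ := exists_le_rankOne_self_not_le_zero hu hv
  have hXsa : IsSelfAdjoint X := by
    have hPX : (rankOne ℂ u u - X).IsPositive := hXu
    simpa only [sub_sub_cancel] using
      (isPositive_rankOne_self u).isSelfAdjoint.sub hPX.isSelfAdjoint
  have hCXA : C + X ≤ A := le_sub_iff_add_le'.mp (hXu.trans huA)
  have hCXB : C + X ≤ B := le_sub_iff_add_le'.mp (hXv.trans hvB)
  exact hX ((add_le_iff_nonpos_right C).mp (hmin (C + X) (hC.add hXsa) hCXA hCXB))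

/-- **Kadison.** The bounded self-adjoint operators on a complex Hilbert
space form an anti-lattice: if `A` and `B` possess a minimum `C` (w.r.t. the order
induced by the cone of positive operators), then `A ≤ B` or `B ≤ A`. -/
theorem stmt4 (H : Type*) [NormedAddCommGroup H] [InnerProductSpace ℂ H] [CompleteSpace H]
    (A B C : H →L[ℂ] H)
    (hA : IsSelfAdjoint A) (hB : IsSelfAdjoint B) (hC : IsSelfAdjoint C)
    (hCA : (A - C).IsPositive) (hCB : (B - C).IsPositive)
    (hmin : ∀ X : H →L[ℂ] H, IsSelfAdjoint X →
      (A - X).IsPositive → (B - X).IsPositive → (C - X).IsPositive) :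
    (B - A).IsPositive ∨ (A - B).IsPositive :=
  stmt4_general H A B C hC hCA hCB hmin
end

section
/- Let H₁ and H₂ be complex Hilbert spaces. The real linear span of the set of operators {a ⊗ b : a a self-adjoint Hilbert–Schmidt operator on H₁, b a self-adjoint Hilbert–Schmidt operator on H₂} is dense, with respect to the Hilbert–Schmidt norm, in the real Hilbert space of self-adjoint Hilbert–Schmidt operators on the Hilbert space tensor product H₁ ⊗ H₂. -/
/-!
The vectors `t (e₁ i) (e₂ j)` form a Hilbert basis `B` of `W`. Let `P` be the orthogonal projection
onto finitely many of them. The compression `P T P` is self-adjoint and a complex combination of the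
rank-one operators `|t u₁ u₂⟩⟨t v₁ v₂|`; polarizing in each factor makes it a complex, hence (being
self-adjoint) a real, combination of the operators `|t x y⟩⟨t x y| = |x⟩⟨x| ⊗ |y⟩⟨y|`. Since `P`
fixes or kills each vector of `B`, the squared Hilbert–Schmidt norm of `T - P T P` is at most that
of `(1 - P) T` plus that of `T (1 - P)`, i.e. twice a tail of the Hilbert–Schmidt sum of `T` in `B`.
-/

open scoped ENNReal
open InnerProductSpace (rankOne)

section HilbertSchmidt

variable {𝕜 E F κ κ' : Type*} [RCLike 𝕜] [NormedAddCommGroup E] [InnerProductSpace 𝕜 E]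
  [NormedAddCommGroup F] [InnerProductSpace 𝕜 F]

lemma HilbertBasis.hasSum_norm_inner_sq (b : HilbertBasis κ 𝕜 E) (x : E) :
    HasSum (fun k => ‖inner 𝕜 (b k) x‖ ^ 2) (‖x‖ ^ 2) := by
  have h := b.hasSum_inner_mul_inner x x
  have hk : ∀ k, inner 𝕜 x (b k) * inner 𝕜 (b k) x = ((‖inner 𝕜 (b k) x‖ ^ 2 : ℝ) : 𝕜) := by
    intro k
    rw [← inner_conj_symm, RCLike.conj_mul]
    norm_cast
  rw [funext hk, inner_self_eq_norm_sq_to_K] at h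
  exact_mod_cast h

lemma HilbertBasis.tsum_enorm_inner_sq (b : HilbertBasis κ 𝕜 E) (x : E) :
    ∑' k, ‖inner 𝕜 (b k) x‖ₑ ^ 2 = ‖x‖ₑ ^ 2 := by
  simp_rw [← ofReal_norm, ← ENNReal.ofReal_pow (norm_nonneg _)]
  rw [← ENNReal.ofReal_tsum_of_nonneg (fun _ => by positivity)
    (b.hasSum_norm_inner_sq x).summable, (b.hasSum_norm_inner_sq x).tsum_eq]

/-- Valued in `ℝ≥0∞`, so that it is meaningful before summability is known. -/
noncomputable def hsNormSq (b : HilbertBasis κ 𝕜 E) (A : E →L[𝕜] F) : ℝ≥0∞ :=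
  ∑' k, ‖A (b k)‖ₑ ^ 2

lemma hsNormSq_adjoint [CompleteSpace E] [CompleteSpace F] (b : HilbertBasis κ 𝕜 E)
    (b' : HilbertBasis κ' 𝕜 F) (A : E →L[𝕜] F) :
    hsNormSq b' (ContinuousLinearMap.adjoint A) = hsNormSq b A := by
  unfold hsNormSq
  simp_rw [← b.tsum_enorm_inner_sq, ← b'.tsum_enorm_inner_sq (A _)]
  rw [ENNReal.tsum_comm]
  refine tsum_congr fun k => tsum_congr fun l => ?_
  rw [ContinuousLinearMap.adjoint_inner_right, ← enorm_norm, norm_inner_symm, enorm_norm]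

lemma hsNormSq_eq_of_basis [CompleteSpace E] [CompleteSpace F] (b : HilbertBasis κ 𝕜 E)
    (b' : HilbertBasis κ' 𝕜 E) (A : E →L[𝕜] F) : hsNormSq b A = hsNormSq b' A := by
  obtain ⟨_, c, -⟩ := exists_hilbertBasis 𝕜 F
  rw [← hsNormSq_adjoint b c, hsNormSq_adjoint b' c]

lemma hsNormSq_eq_ofReal_tsum {b : HilbertBasis κ 𝕜 E} {A : E →L[𝕜] F}
    (hA : Summable fun k => ‖A (b k)‖ ^ 2) :
    hsNormSq b A = ENNReal.ofReal (∑' k, ‖A (b k)‖ ^ 2) := by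
  rw [hsNormSq, ENNReal.ofReal_tsum_of_nonneg (fun _ => by positivity) hA]
  simp_rw [ENNReal.ofReal_pow (norm_nonneg _), ofReal_norm]

lemma summable_of_hsNormSq_ne_top {b : HilbertBasis κ 𝕜 E} {A : E →L[𝕜] F}
    (hA : hsNormSq b A ≠ ∞) : Summable fun k => ‖A (b k)‖ ^ 2 := by
  simp_rw [hsNormSq, enorm_eq_nnnorm, ← ENNReal.coe_pow] at hA
  simpa only [NNReal.coe_pow, coe_nnnorm] using
    NNReal.summable_coe.mpr (ENNReal.tsum_coe_ne_top_iff_summable.mp hA)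

end HilbertSchmidt

section RankOne

variable {𝕜 E F : Type*} [RCLike 𝕜] [NormedAddCommGroup E] [InnerProductSpace 𝕜 E]
  [NormedAddCommGroup F] [InnerProductSpace 𝕜 F]

lemma rankOne_mul_mul_rankOne (x y z w : E) (A : E →L[𝕜] E) :
    rankOne 𝕜 x y * A * rankOne 𝕜 z w = inner 𝕜 y (A z) • rankOne 𝕜 x w := by
  simp [ContinuousLinearMap.mul_def, InnerProductSpace.comp_rankOne]

lemma Orthonormal.summable_norm_rankOne_apply_sq {ι : Type*} {v : ι → E} (hv : Orthonormal 𝕜 v)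
    (x : F) (y : E) : Summable fun i => ‖rankOne 𝕜 x y (v i)‖ ^ 2 := by
  refine ((hv.inner_products_summable y).mul_right (‖x‖ ^ 2)).congr fun i => ?_
  rw [InnerProductSpace.rankOne_apply, norm_smul, mul_pow, norm_inner_symm]

end RankOne

section Compression

variable {𝕜 E κ : Type*} [RCLike 𝕜] [NormedAddCommGroup E] [InnerProductSpace 𝕜 E]

lemma isSelfAdjoint_rankOne_self [CompleteSpace E] (x : E) : IsSelfAdjoint (rankOne 𝕜 x x) := by
  rw [IsSelfAdjoint, ContinuousLinearMap.star_eq_adjoint, InnerProductSpace.adjoint_rankOne]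

noncomputable def HilbertBasis.projFinset (b : HilbertBasis κ 𝕜 E) (F : Finset κ) : E →L[𝕜] E :=
  ∑ p ∈ F, rankOne 𝕜 (b p) (b p)

lemma HilbertBasis.isSelfAdjoint_projFinset [CompleteSpace E] (b : HilbertBasis κ 𝕜 E)
    (F : Finset κ) : IsSelfAdjoint (b.projFinset F) :=
  isSelfAdjoint_sum F fun p _ => isSelfAdjoint_rankOne_self (b p)

lemma HilbertBasis.projFinset_apply_of_mem (b : HilbertBasis κ 𝕜 E) {F : Finset κ} {k : κ}
    (hk : k ∈ F) : b.projFinset F (b k) = b k := by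
  classical
  simp [projFinset, orthonormal_iff_ite.mp b.orthonormal, hk]

lemma HilbertBasis.projFinset_apply_of_notMem (b : HilbertBasis κ 𝕜 E) {F : Finset κ} {k : κ}
    (hk : k ∉ F) : b.projFinset F (b k) = 0 := by
  classical
  simp [projFinset, orthonormal_iff_ite.mp b.orthonormal, hk]

lemma hsNormSq_mul_one_sub_projFinset (b : HilbertBasis κ 𝕜 E) (F : Finset κ) (T : E →L[𝕜] E) :
    hsNormSq b (T * (1 - b.projFinset F)) = ∑' k : {k // k ∉ F}, ‖T (b k)‖ₑ ^ 2 := by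
  refine .symm <| (tsum_subtype {k | k ∉ F} fun k => ‖T (b k)‖ₑ ^ 2).trans <|
    tsum_congr fun k => ?_
  by_cases hk : k ∈ F
  · simp [b.projFinset_apply_of_mem hk, hk]
  · simp [b.projFinset_apply_of_notMem hk, hk]

lemma hsNormSq_sub_mul_mul_le (b : HilbertBasis κ 𝕜 E) (T P : E →L[𝕜] E)
    (hP : ∀ k, P (b k) = b k ∨ P (b k) = 0) :
    hsNormSq b (T - P * T * P) ≤ hsNormSq b ((1 - P) * T) + hsNormSq b (T * (1 - P)) := by
  rw [hsNormSq, hsNormSq, hsNormSq, ← ENNReal.tsum_add]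
  refine ENNReal.tsum_le_tsum fun k => ?_
  rcases hP k with h | h <;> simp [h]

lemma hsNormSq_sub_compress_le [CompleteSpace E] (b : HilbertBasis κ 𝕜 E) (F : Finset κ)
    {T : E →L[𝕜] E} (hT : IsSelfAdjoint T) :
    hsNormSq b (T - b.projFinset F * T * b.projFinset F)
      ≤ 2 * ∑' k : {k // k ∉ F}, ‖T (b k)‖ₑ ^ 2 := by
  have hP := b.isSelfAdjoint_projFinset F
  have hswap :
      hsNormSq b ((1 - b.projFinset F) * T) = hsNormSq b (T * (1 - b.projFinset F)) := by
    rw [← hsNormSq_adjoint b b (T * _), ← ContinuousLinearMap.star_eq_adjoint, star_mul,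
      star_sub, star_one, hP.star_eq, hT.star_eq]
  refine (hsNormSq_sub_mul_mul_le b T _ fun k => ?_).trans_eq ?_
  · by_cases hk : k ∈ F
    · exact .inl (b.projFinset_apply_of_mem hk)
    · exact .inr (b.projFinset_apply_of_notMem hk)
  · rw [hswap, hsNormSq_mul_one_sub_projFinset, two_mul]

lemma HilbertBasis.projFinset_mul_mul_projFinset_mem_span (b : HilbertBasis κ 𝕜 E)
    (F : Finset κ) (T : E →L[𝕜] E) :
    b.projFinset F * T * b.projFinset F
      ∈ Submodule.span 𝕜 (Set.range fun pq : κ × κ => rankOne 𝕜 (b pq.1) (b pq.2)) := by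
  simp only [projFinset, Finset.sum_mul, Finset.mul_sum, rankOne_mul_mul_rankOne]
  exact Submodule.sum_mem _ fun p _ => Submodule.sum_mem _ fun q _ =>
    Submodule.smul_mem _ _ (Submodule.subset_span ⟨(_, _), rfl⟩)

end Compression

section ProductBasis

variable {𝕜 H₁ H₂ W ι ι₁ ι₂ : Type*} [RCLike 𝕜]
  [NormedAddCommGroup H₁] [InnerProductSpace 𝕜 H₁]
  [NormedAddCommGroup H₂] [InnerProductSpace 𝕜 H₂]
  [NormedAddCommGroup W] [InnerProductSpace 𝕜 W]

lemma HilbertBasis.mem_of_forall_mem (b : HilbertBasis ι 𝕜 H₁) {L : H₁ →ₗ[𝕜] W}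
    (hL : Continuous L) {K : Submodule 𝕜 W} (hK : IsClosed (K : Set W)) (h : ∀ i, L (b i) ∈ K)
    (x : H₁) : L x ∈ K := by
  have hspan : Submodule.span 𝕜 (Set.range b) ≤ K.comap L :=
    Submodule.span_le.mpr (Set.range_subset_iff.mpr h)
  have := Submodule.topologicalClosure_minimal _ hspan (hK.preimage hL)
  rw [b.dense_span] at this
  exact this Submodule.mem_top

variable {t : H₁ →ₗ[𝕜] H₂ →ₗ[𝕜] W}
  (ht : ∀ x₁ y₁ x₂ y₂, inner 𝕜 (t x₁ x₂) (t y₁ y₂) = inner 𝕜 x₁ y₁ * inner 𝕜 x₂ y₂)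
include ht

lemma norm_bilin (x : H₁) (y : H₂) : ‖t x y‖ = ‖x‖ * ‖y‖ := by
  have h := ht x x y y
  simp only [inner_self_eq_norm_sq_to_K] at h
  have h' : ‖t x y‖ ^ 2 = (‖x‖ * ‖y‖) ^ 2 := by rw [mul_pow]; exact_mod_cast h
  exact (pow_left_inj₀ (norm_nonneg _) (by positivity) two_ne_zero).mp h'

lemma rankOne_bilin_apply_bilin (x₁ y₁ x : H₁) (x₂ y₂ y : H₂) :
    rankOne 𝕜 (t x₁ x₂) (t y₁ y₂) (t x y) = t (rankOne 𝕜 x₁ y₁ x) (rankOne 𝕜 x₂ y₂ y) := by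
  simp only [InnerProductSpace.rankOne_apply, ht, map_smul, LinearMap.smul_apply, smul_smul]
  rw [mul_comm]

lemma orthonormal_bilin {v₁ : ι₁ → H₁} {v₂ : ι₂ → H₂} (h₁ : Orthonormal 𝕜 v₁)
    (h₂ : Orthonormal 𝕜 v₂) : Orthonormal 𝕜 fun p : ι₁ × ι₂ => t (v₁ p.1) (v₂ p.2) := by
  classical
  refine orthonormal_iff_ite.mpr fun p q => ?_
  rw [ht, orthonormal_iff_ite.mp h₁, orthonormal_iff_ite.mp h₂]
  by_cases h₁ : p.1 = q.1 <;> by_cases h₂ : p.2 = q.2 <;> simp [h₁, h₂, Prod.ext_iff]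

lemma exists_hilbertBasis_bilin [CompleteSpace W]
    (hdense : Dense (Submodule.span 𝕜 {w : W | ∃ x y, w = t x y} : Set W))
    (e₁ : HilbertBasis ι₁ 𝕜 H₁) (e₂ : HilbertBasis ι₂ 𝕜 H₂) :
    ∃ B : HilbertBasis (ι₁ × ι₂) 𝕜 W, ⇑B = fun p => t (e₁ p.1) (e₂ p.2) := by
  set K :=
    (Submodule.span 𝕜 (Set.range fun p : ι₁ × ι₂ => t (e₁ p.1) (e₂ p.2))).topologicalClosure
  have hK : IsClosed (K : Set W) := Submodule.isClosed_topologicalClosure _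
  have hcont₁ (y : H₂) : Continuous (t.flip y) :=
    AddMonoidHomClass.continuous_of_bound _ ‖y‖ fun x => by
      simp [norm_bilin ht, mul_comm]
  have hcont₂ (x : H₁) : Continuous (t x) :=
    AddMonoidHomClass.continuous_of_bound _ ‖x‖ fun y => (norm_bilin ht x y).le
  have hmem (x : H₁) (y : H₂) : t x y ∈ K :=
    e₂.mem_of_forall_mem (hcont₂ x) hK (fun j => e₁.mem_of_forall_mem (hcont₁ (e₂ j)) hK
      (fun i => Submodule.le_topologicalClosure _ (Submodule.subset_span ⟨(i, j), rfl⟩)) x) y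
  have htop : ⊤ ≤ K := by
    rw [← Submodule.dense_iff_topologicalClosure_eq_top.mp hdense]
    refine Submodule.topologicalClosure_minimal _ ?_ hK
    rw [Submodule.span_le]
    rintro _ ⟨x, y, rfl⟩
    exact hmem x y
  exact ⟨.mk (orthonormal_bilin ht e₁.orthonormal e₂.orthonormal) htop,
    HilbertBasis.coe_mk _ _⟩

end ProductBasis

section Polarization

variable {E F G : Type*} [AddCommGroup E] [Module ℂ E] [NormedAddCommGroup F]
  [InnerProductSpace ℂ F] [NormedAddCommGroup G] [InnerProductSpace ℂ G]

lemma rankOne_mem_span_rankOne_self (g : E →ₗ[ℂ] F) (g' : E →ₗ[ℂ] G) (u v : E) :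
    rankOne ℂ (g u) (g' v) ∈ Submodule.span ℂ (Set.range fun w => rankOne ℂ (g w) (g' w)) := by
  set D : ℂ → G →L[ℂ] F := fun c => rankOne ℂ (g (u + c • v)) (g' (u + c • v))
  have hD : ∀ c, D c ∈ Submodule.span ℂ (Set.range fun w => rankOne ℂ (g w) (g' w)) :=
    fun c => Submodule.subset_span ⟨_, rfl⟩
  have hpolar : rankOne ℂ (g u) (g' v)
      = (4 : ℂ)⁻¹ • (D 1 - D (-1) + Complex.I • (D Complex.I - D (-Complex.I))) := by
    simp only [D, map_add, map_smul, map_smulₛₗ, add_apply, smul_apply, Complex.conj_I, map_neg,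
      map_one, one_smul, neg_smul]
    match_scalars <;> ring_nf <;> norm_num [Complex.I_sq]
  rw [hpolar]
  exact Submodule.smul_mem _ _ (Submodule.add_mem _ (Submodule.sub_mem _ (hD 1) (hD (-1)))
    (Submodule.smul_mem _ _ (Submodule.sub_mem _ (hD _) (hD _))))

lemma rankOne_bilin_mem_span_rankOne_self {H₁ H₂ : Type*} [AddCommGroup H₁] [Module ℂ H₁]
    [AddCommGroup H₂] [Module ℂ H₂] (t : H₁ →ₗ[ℂ] H₂ →ₗ[ℂ] F) (u₁ v₁ : H₁) (u₂ v₂ : H₂) :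
    rankOne ℂ (t u₁ u₂) (t v₁ v₂)
      ∈ Submodule.span ℂ (Set.range fun p : H₁ × H₂ => rankOne ℂ (t p.1 p.2) (t p.1 p.2)) := by
  have hdiag (x : H₁) (y y' : H₂) : rankOne ℂ (t x y) (t x y')
      ∈ Submodule.span ℂ (Set.range fun p : H₁ × H₂ => rankOne ℂ (t p.1 p.2) (t p.1 p.2)) :=
    Submodule.span_mono (Set.range_subset_iff.mpr fun w => Set.mem_range.mpr ⟨(x, w), rfl⟩)
      (rankOne_mem_span_rankOne_self (t x) (t x) y y')
  refine Submodule.span_le.mpr ?_ (rankOne_mem_span_rankOne_self (t.flip u₂) (t.flip v₂) u₁ v₁)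
  rintro _ ⟨x, rfl⟩
  exact hdiag x u₂ v₂

end Polarization

lemma mem_span_real_of_mem_span_complex {A : Type*} [AddCommGroup A] [Module ℂ A] [Module ℝ A]
    [IsScalarTower ℝ ℂ A] [StarAddMonoid A] [StarModule ℂ A] {G : Set A}
    (hG : ∀ g ∈ G, IsSelfAdjoint g) {x : A} (hx : x ∈ Submodule.span ℂ G)
    (hsa : IsSelfAdjoint x) : x ∈ Submodule.span ℝ G := by
  -- `x ↦ x + star x` is only `ℝ`-linear, so the induction carries all complex multiples along.
  suffices h : ∀ c : ℂ, c • x + star (c • x) ∈ Submodule.span ℝ G by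
    convert h 2⁻¹ using 1
    rw [star_smul, hsa.star_eq, ← add_smul]
    norm_num
  clear hsa
  induction hx using Submodule.span_induction with
  | mem g hg =>
    intro c
    rw [star_smul, (hG g hg).star_eq, ← add_smul, Complex.star_def, Complex.add_conj]
    have h := Submodule.smul_mem (Submodule.span ℝ G) (2 * c.re) (Submodule.subset_span hg)
    rwa [RCLike.real_smul_eq_coe_smul (K := ℂ)] at h
  | zero => simp
  | add x y _ _ hx hy =>
    intro c
    rw [smul_add, star_add, add_add_add_comm]
    exact Submodule.add_mem _ (hx c) (hy c)
  | smul a x _ hx =>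
    intro c
    rw [smul_smul]
    exact hx (c * a)

section SelfAdjointTensors

variable {H₁ H₂ W ι₁ ι₂ : Type*}
  [NormedAddCommGroup H₁] [InnerProductSpace ℂ H₁] [CompleteSpace H₁]
  [NormedAddCommGroup H₂] [InnerProductSpace ℂ H₂] [CompleteSpace H₂]
  [NormedAddCommGroup W] [InnerProductSpace ℂ W]

def selfAdjointHSTensors (t : H₁ →ₗ[ℂ] H₂ →ₗ[ℂ] W) (e₁ : HilbertBasis ι₁ ℂ H₁)
    (e₂ : HilbertBasis ι₂ ℂ H₂) : Set (W →L[ℂ] W) :=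
  {X | ∃ (a : H₁ →L[ℂ] H₁) (b : H₂ →L[ℂ] H₂),
    IsSelfAdjoint a ∧ IsSelfAdjoint b ∧
    (Summable fun i => ‖a (e₁ i)‖ ^ 2) ∧ (Summable fun i => ‖b (e₂ i)‖ ^ 2) ∧
    ∀ x y, X (t x y) = t (a x) (b y)}

variable {t : H₁ →ₗ[ℂ] H₂ →ₗ[ℂ] W}
  (ht : ∀ x₁ y₁ x₂ y₂, inner ℂ (t x₁ x₂) (t y₁ y₂) = inner ℂ x₁ y₁ * inner ℂ x₂ y₂)
  (e₁ : HilbertBasis ι₁ ℂ H₁) (e₂ : HilbertBasis ι₂ ℂ H₂)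
include ht

lemma rankOne_self_mem_selfAdjointHSTensors (x : H₁) (y : H₂) :
    rankOne ℂ (t x y) (t x y) ∈ selfAdjointHSTensors t e₁ e₂ :=
  ⟨rankOne ℂ x x, rankOne ℂ y y, isSelfAdjoint_rankOne_self x, isSelfAdjoint_rankOne_self y,
    e₁.orthonormal.summable_norm_rankOne_apply_sq x x,
    e₂.orthonormal.summable_norm_rankOne_apply_sq y y,
    fun x' y' => rankOne_bilin_apply_bilin ht x x x' y y y'⟩

lemma mem_span_selfAdjointHSTensors [CompleteSpace W] {X : W →L[ℂ] W}
    (hX : X ∈ Submodule.span ℂ {X | ∃ u₁ v₁ u₂ v₂, X = rankOne ℂ (t u₁ u₂) (t v₁ v₂)})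
    (hXsa : IsSelfAdjoint X) : X ∈ Submodule.span ℝ (selfAdjointHSTensors t e₁ e₂) := by
  have hspan :
      X ∈ Submodule.span ℂ (Set.range fun p : H₁ × H₂ => rankOne ℂ (t p.1 p.2) (t p.1 p.2)) := by
    refine Submodule.span_le.mpr ?_ hX
    rintro _ ⟨u₁, v₁, u₂, v₂, rfl⟩
    exact rankOne_bilin_mem_span_rankOne_self t u₁ v₁ u₂ v₂
  refine Submodule.span_mono ?_ (mem_span_real_of_mem_span_complex ?_ hspan hXsa)
  · rintro _ ⟨p, rfl⟩
    exact rankOne_self_mem_selfAdjointHSTensors ht e₁ e₂ p.1 p.2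
  · rintro _ ⟨p, rfl⟩
    exact isSelfAdjoint_rankOne_self _

end SelfAdjointTensors

/-- The real linear span of tensor products `a ⊗ b` of self-adjoint
Hilbert–Schmidt operators on `H₁` resp. `H₂` is dense, in Hilbert–Schmidt norm, in the
self-adjoint Hilbert–Schmidt operators on the Hilbert tensor product `W = H₁ ⊗ H₂`
(presented via a bilinear map `t` with the characteristic inner-product property and
dense span). Hilbert–Schmidt-ness and the Hilbert–Schmidt norm are expressed with
respect to given Hilbert bases. -/
theorem stmt6 (H₁ H₂ W : Type*)
    [NormedAddCommGroup H₁] [InnerProductSpace ℂ H₁] [CompleteSpace H₁]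
    [NormedAddCommGroup H₂] [InnerProductSpace ℂ H₂] [CompleteSpace H₂]
    [NormedAddCommGroup W] [InnerProductSpace ℂ W] [CompleteSpace W]
    (t : H₁ →ₗ[ℂ] H₂ →ₗ[ℂ] W)
    (ht : ∀ (x₁ y₁ : H₁) (x₂ y₂ : H₂),
      (inner ℂ (t x₁ x₂) (t y₁ y₂) : ℂ) = (inner ℂ x₁ y₁ : ℂ) * (inner ℂ x₂ y₂ : ℂ))
    (hdense : Dense (↑(Submodule.span ℂ {w : W | ∃ x y, w = t x y}) : Set W))
    (ι₁ ι₂ ι : Type*) (e₁ : HilbertBasis ι₁ ℂ H₁) (e₂ : HilbertBasis ι₂ ℂ H₂)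
    (e : HilbertBasis ι ℂ W)
    (T : W →L[ℂ] W) (hT : IsSelfAdjoint T)
    (hTHS : Summable fun i : ι => ‖T (e i)‖ ^ 2)
    (ε : ℝ) (hε : 0 < ε) :
    ∃ S : W →L[ℂ] W,
      S ∈ Submodule.span ℝ {X : W →L[ℂ] W |
        ∃ (a : H₁ →L[ℂ] H₁) (b : H₂ →L[ℂ] H₂),
          IsSelfAdjoint a ∧ IsSelfAdjoint b ∧
          (Summable fun i : ι₁ => ‖a (e₁ i)‖ ^ 2) ∧
          (Summable fun i : ι₂ => ‖b (e₂ i)‖ ^ 2) ∧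
          ∀ x y, X (t x y) = t (a x) (b y)} ∧
      (Summable fun i : ι => ‖(T - S) (e i)‖ ^ 2) ∧
      (∑' i : ι, ‖(T - S) (e i)‖ ^ 2) < ε ^ 2 := by
  obtain ⟨B, hB⟩ := exists_hilbertBasis_bilin ht hdense e₁ e₂
  have hTB : ∑' p, ‖T (B p)‖ₑ ^ 2 ≠ ∞ := by
    rw [← hsNormSq, hsNormSq_eq_of_basis B e, hsNormSq_eq_ofReal_tsum hTHS]
    exact ENNReal.ofReal_ne_top
  have hε' : (0 : ℝ≥0∞) < ENNReal.ofReal (ε ^ 2) / 2 := by simp [hε.ne']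
  obtain ⟨F, hF⟩ :=
    ((ENNReal.tendsto_tsum_compl_atTop_zero hTB).eventually (gt_mem_nhds hε')).exists
  set S := B.projFinset F * T * B.projFinset F
  have hSsa : IsSelfAdjoint S := by
    simpa only [(B.isSelfAdjoint_projFinset F).star_eq] using hT.conjugate (B.projFinset F)
  have hS : S ∈ Submodule.span ℝ (selfAdjointHSTensors t e₁ e₂) := by
    refine mem_span_selfAdjointHSTensors ht e₁ e₂ (Submodule.span_mono ?_
      (B.projFinset_mul_mul_projFinset_mem_span F T)) hSsa
    rintro _ ⟨pq, rfl⟩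
    exact ⟨_, _, _, _, by rw [hB]⟩
  have hlt : hsNormSq e (T - S) < ENNReal.ofReal (ε ^ 2) := by
    rw [hsNormSq_eq_of_basis e B]
    exact (hsNormSq_sub_compress_le B F hT).trans_lt (ENNReal.mul_lt_of_lt_div' hF)
  have hsum := summable_of_hsNormSq_ne_top hlt.ne_top
  refine ⟨S, hS, hsum, ?_⟩
  rwa [hsNormSq_eq_ofReal_tsum hsum, ENNReal.ofReal_lt_ofReal_iff (pow_pos hε 2)] at hlt
end

section
/- Let n, m ≥ 1 and let S be a real-linear map from the Hermitian n×n complex matrices to the Hermitian m×m complex matrices. Then S is completely positive — i.e., for every k ≥ 1 the induced map id_k ⊗ S on Hermitian (kn)×(kn) matrices maps positive semidefinite matrices to positive semidefinite matrices — if and only if the unique real-linear functional S' on Hermitian (nm)×(nm) complex matrices satisfying S'(a ⊗ bᵀ) = tr(S(a)·b) for all Hermitian n×n matrices a and Hermitian m×m matrices b is positive, i.e., S'(T) ≥ 0 for every positive semidefinite Hermitian T. Moreover S' exists and is unique. Equivalently, S is completely positive if and only if the transpose of the Choi matrix Σ_{i,j} E_{ij} ⊗ S(E_{ij}) is positive semidefinite.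 -/
/-!
Let `C = ∑ i j, E_ij ⊗ S(E_ij)` be the Choi matrix of `S`. The functional `T ↦ tr (Cᵀ T)`
satisfies `tr (Cᵀ (a ⊗ bᵀ)) = tr (S(a) b)`, and it is the only such functional since the products
`a ⊗ b` of Hermitian matrices span all matrices. The PSD cone is self-dual for the trace pairing,
so this functional is positive iff `Cᵀ`, equivalently `C`, is PSD. Finally `C = (id ⊗ S)(ω ωᴴ)`
for the maximally entangled vector `ω = ∑ i, |i, i⟩`, and conversely
`(id_k ⊗ S)(M) = Vᴴ (M ⊗ C) V` for an explicit `V`, which is PSD whenever `M` and `C` are.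
-/

open Matrix
open scoped ComplexOrder Kronecker

namespace Matrix

section Positivity

variable {ι : Type*} [Fintype ι]

theorem posSemidef_iff_forall_dotProduct_mulVec_nonneg {A : Matrix ι ι ℂ} :
    A.PosSemidef ↔ ∀ x, 0 ≤ star x ⬝ᵥ (A *ᵥ x) := by
  classical
  refine ⟨fun hA => hA.dotProduct_mulVec_nonneg, fun h => ?_⟩
  rw [← isPositive_toEuclideanLin_iff, LinearMap.isPositive_iff_complex]
  intro x
  have hx := Complex.nonneg_iff.mp (h x.ofLp)
  have hconj : x.ofLp ⬝ᵥ star (A *ᵥ x.ofLp) = star (star x.ofLp ⬝ᵥ A *ᵥ x.ofLp) := by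
    rw [star_dotProduct, star_star, dotProduct_comm]
  simp only [EuclideanSpace.inner_eq_star_dotProduct, Matrix.ofLp_toLpLin, Matrix.toLin'_apply,
    hconj]
  simp [Complex.ext_iff, ← hx.2, hx.1]

theorem trace_mul_vecMulVec {R : Type*} [CommSemiring R] (A : Matrix ι ι R) (x y : ι → R) :
    trace (A * vecMulVec x y) = y ⬝ᵥ (A *ᵥ x) := by
  rw [mul_vecMulVec, trace_vecMulVec, dotProduct_comm]

theorem PosSemidef.trace_mul_nonneg {𝕜 : Type*} [RCLike 𝕜] {A B : Matrix ι ι 𝕜}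
    (hA : A.PosSemidef) (hB : B.PosSemidef) : 0 ≤ trace (A * B) := by
  obtain ⟨r, v, rfl⟩ := posSemidef_iff_eq_sum_vecMulVec.mp hB
  simp only [Matrix.mul_sum, trace_sum, trace_mul_vecMulVec]
  exact Finset.sum_nonneg fun i _ => hA.dotProduct_mulVec_nonneg (v i)

theorem posSemidef_iff_forall_trace_mul_nonneg {A : Matrix ι ι ℂ} :
    A.PosSemidef ↔ ∀ B : Matrix ι ι ℂ, B.PosSemidef → 0 ≤ trace (A * B) := by
  refine ⟨fun hA B hB => hA.trace_mul_nonneg hB, fun h => ?_⟩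
  rw [posSemidef_iff_forall_dotProduct_mulVec_nonneg]
  intro x
  rw [← trace_mul_vecMulVec]
  exact h _ (posSemidef_vecMulVec_self_star x)

end Positivity

theorem trace_transpose_mul_eq_sum {m n α : Type*} [Fintype m] [Fintype n] [AddCommMonoid α]
    [Mul α] (A B : Matrix m n α) :
    trace (Aᵀ * B) = ∑ p, ∑ q, A p q * B p q := by
  simp only [trace, diag, mul_apply, transpose_apply]
  exact Finset.sum_comm

theorem linearMap_ext_kronecker_of_isHermitian {ι κ V : Type*} [Fintype ι] [Fintype κ]
    [DecidableEq ι] [DecidableEq κ] [AddCommMonoid V] [Module ℂ V]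
    {f g : Matrix (ι × κ) (ι × κ) ℂ →ₗ[ℂ] V}
    (h : ∀ a b, a.IsHermitian → b.IsHermitian → f (a ⊗ₖ b) = g (a ⊗ₖ b)) : f = g := by
  have hall : ∀ a b, f (a ⊗ₖ b) = g (a ⊗ₖ b) := by
    intro a b
    rw [← realPart_add_I_smul_imaginaryPart a, ← realPart_add_I_smul_imaginaryPart b]
    simp only [add_kronecker, kronecker_add, smul_kronecker, kronecker_smul, map_add,
      map_smul, h _ _ (realPart _).2 (realPart _).2, h _ _ (realPart _).2 (imaginaryPart _).2,
      h _ _ (imaginaryPart _).2 (realPart _).2, h _ _ (imaginaryPart _).2 (imaginaryPart _).2]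
  refine ext_linearMap (R := ℂ) fun ⟨i, k⟩ ⟨j, l⟩ => LinearMap.ext_ring ?_
  simpa [single_kronecker_single] using hall (single i j 1) (single k l 1)

end Matrix

section Choi

variable {ι κ : Type*} [Fintype ι] [DecidableEq ι]
variable (S : Matrix ι ι ℂ →ₗ[ℂ] Matrix κ κ ℂ)

noncomputable def choiMatrix : Matrix (ι × κ) (ι × κ) ℂ :=
  ∑ i, ∑ j, single i j (1 : ℂ) ⊗ₖ S (single i j 1)

theorem choiMatrix_apply (i j : ι) (k l : κ) :
    choiMatrix S (i, k) (j, l) = S (single i j 1) k l := by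
  simp [choiMatrix, Matrix.sum_apply, single_apply, ite_and]

theorem apply_eq_sum_choiMatrix (a : Matrix ι ι ℂ) (k l : κ) :
    S a k l = ∑ i, ∑ j, a i j * choiMatrix S (i, k) (j, l) := by
  have hsingle (i j : ι) : single i j (a i j) = a i j • single i j 1 := by
    rw [smul_single, smul_eq_mul, mul_one]
  conv_lhs => rw [matrix_eq_sum_single a]
  simp only [hsingle, map_sum, map_smul, Matrix.sum_apply, Matrix.smul_apply, smul_eq_mul,
    choiMatrix_apply]

def ampliation (k : Type*) (M : Matrix (k × ι) (k × ι) ℂ) : Matrix (k × κ) (k × κ) ℂ :=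
  of fun p q => S (of fun a b => M (p.1, a) (q.1, b)) p.2 q.2

def maximallyEntangledVector (ι : Type*) [DecidableEq ι] : ι × ι → ℂ :=
  fun p => if p.1 = p.2 then 1 else 0

theorem ampliation_maximallyEntangled_eq_choiMatrix :
    ampliation S ι (vecMulVec (maximallyEntangledVector ι) (star (maximallyEntangledVector ι))) =
      choiMatrix S := by
  ext ⟨i, k⟩ ⟨j, l⟩
  rw [choiMatrix_apply, ampliation, of_apply]
  refine congrArg (fun X => S X k l) (ext fun a b => ?_)
  by_cases hi : i = a <;> by_cases hj : j = b <;>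
    simp [maximallyEntangledVector, vecMulVec_apply, hi, hj]

theorem choiMatrix_posSemidef_of_ampliation
    (h : ∀ M : Matrix (ι × ι) (ι × ι) ℂ, M.PosSemidef → (ampliation S ι M).PosSemidef) :
    (choiMatrix S).PosSemidef :=
  ampliation_maximallyEntangled_eq_choiMatrix S ▸ h _ (posSemidef_vecMulVec_self_star _)

variable [Fintype κ]

noncomputable def choiFunctional : Matrix (ι × κ) (ι × κ) ℂ →ₗ[ℂ] ℂ :=
  traceLinearMap _ ℂ ℂ ∘ₗ LinearMap.mulLeft ℂ (choiMatrix S)ᵀ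

theorem choiFunctional_apply (T : Matrix (ι × κ) (ι × κ) ℂ) :
    choiFunctional S T = trace ((choiMatrix S)ᵀ * T) := rfl

theorem choiFunctional_kronecker_transpose (a : Matrix ι ι ℂ) (b : Matrix κ κ ℂ) :
    choiFunctional S (a ⊗ₖ bᵀ) = trace (S a * b) := by
  rw [choiFunctional_apply, trace_transpose_mul_eq_sum]
  simp only [Fintype.sum_prod_type, kroneckerMap_apply, transpose_apply, trace, diag, mul_apply,
    apply_eq_sum_choiMatrix, Finset.sum_mul]
  rw [Finset.sum_comm]
  refine Finset.sum_congr rfl fun k _ => ?_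
  conv_rhs => rw [Finset.sum_comm]
  refine Finset.sum_congr rfl fun i _ => ?_
  rw [Finset.sum_comm]
  exact Finset.sum_congr rfl fun l _ => Finset.sum_congr rfl fun j _ => by ring

theorem eq_choiFunctional_of_kronecker_transpose [DecidableEq κ]
    {F : Matrix (ι × κ) (ι × κ) ℂ →ₗ[ℂ] ℂ}
    (hF : ∀ a b, a.IsHermitian → b.IsHermitian → F (a ⊗ₖ bᵀ) = trace (S a * b)) :
    F = choiFunctional S := by
  refine linearMap_ext_kronecker_of_isHermitian fun a b ha hb => ?_
  rw [← transpose_transpose b, choiFunctional_kronecker_transpose]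
  exact hF a bᵀ ha hb.transpose

theorem choiMatrix_transpose_posSemidef_iff :
    (choiMatrix S)ᵀ.PosSemidef ↔
      ∀ T : Matrix (ι × κ) (ι × κ) ℂ, T.PosSemidef → ∃ r : ℝ, 0 ≤ r ∧ choiFunctional S T = r := by
  rw [posSemidef_iff_forall_trace_mul_nonneg]
  refine forall₂_congr fun T _ => ?_
  rw [choiFunctional_apply, RCLike.nonneg_iff_exists_ofReal]
  exact exists_congr fun r => and_congr_right' eq_comm

/-- The map `|p, x⟩ ↦ ∑ i, |p, i⟩ ⊗ |i, x⟩`, tensoring in the maximally entangled vector. -/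
def maximallyEntangledEmbedding (k ι κ : Type*) [DecidableEq k] [DecidableEq ι] [DecidableEq κ] :
    Matrix ((k × ι) × (ι × κ)) (k × κ) ℂ :=
  of fun u x => if u.1.1 = x.1 ∧ u.1.2 = u.2.1 ∧ u.2.2 = x.2 then 1 else 0

theorem ampliation_eq_conjTranspose_mul_kronecker_mul {k : Type*} [Fintype k] [DecidableEq k]
    [DecidableEq κ] (M : Matrix (k × ι) (k × ι) ℂ) :
    ampliation S k M =
      (maximallyEntangledEmbedding k ι κ)ᴴ * (M ⊗ₖ choiMatrix S) *
        maximallyEntangledEmbedding k ι κ := by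
  ext ⟨p, k2⟩ ⟨q, l2⟩
  simp only [ampliation, apply_eq_sum_choiMatrix, of_apply, maximallyEntangledEmbedding, ite_and,
    mul_apply, conjTranspose_apply, RCLike.star_def, apply_ite (starRingEnd ℂ), map_one,
    map_zero, kroneckerMap_apply, ite_mul, one_mul, zero_mul, Fintype.sum_prod_type,
    Finset.sum_ite_irrel, Finset.sum_ite_eq', Finset.mem_univ, if_true, Finset.sum_const_zero,
    Finset.sum_ite_eq, mul_ite, mul_one, mul_zero]
  exact Finset.sum_comm

theorem ampliation_posSemidef_of_choiMatrix {S : Matrix ι ι ℂ →ₗ[ℂ] Matrix κ κ ℂ}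
    (hS : (choiMatrix S).PosSemidef) {k : Type*} [Fintype k] {M : Matrix (k × ι) (k × ι) ℂ}
    (hM : M.PosSemidef) : (ampliation S k M).PosSemidef := by
  classical
  rw [ampliation_eq_conjTranspose_mul_kronecker_mul]
  exact (hM.kronecker hS).conjTranspose_mul_mul_same _

end Choi

theorem stmt9_general (n m : ℕ) (hn : 1 ≤ n)
    (S : Matrix (Fin n) (Fin n) ℂ →ₗ[ℂ] Matrix (Fin m) (Fin m) ℂ) :
    (∃! S' : Matrix (Fin n × Fin m) (Fin n × Fin m) ℂ →ₗ[ℂ] ℂ,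
      ∀ (a : Matrix (Fin n) (Fin n) ℂ) (b : Matrix (Fin m) (Fin m) ℂ),
        a.IsHermitian → b.IsHermitian →
        S' (Matrix.kroneckerMap (· * ·) a bᵀ) = Matrix.trace (S a * b)) ∧
    (∀ S' : Matrix (Fin n × Fin m) (Fin n × Fin m) ℂ →ₗ[ℂ] ℂ,
      (∀ (a : Matrix (Fin n) (Fin n) ℂ) (b : Matrix (Fin m) (Fin m) ℂ),
        a.IsHermitian → b.IsHermitian →
        S' (Matrix.kroneckerMap (· * ·) a bᵀ) = Matrix.trace (S a * b)) →
      ((∀ k : ℕ, 1 ≤ k →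
          ∀ M : Matrix (Fin k × Fin n) (Fin k × Fin n) ℂ, M.PosSemidef →
            (Matrix.of fun p q : Fin k × Fin m =>
              S (Matrix.of fun a b : Fin n => M (p.1, a) (q.1, b)) p.2 q.2).PosSemidef) ↔
        (∀ T : Matrix (Fin n × Fin m) (Fin n × Fin m) ℂ, T.PosSemidef →
          ∃ r : ℝ, 0 ≤ r ∧ S' T = (r : ℂ)))) ∧
    ((∀ k : ℕ, 1 ≤ k →
        ∀ M : Matrix (Fin k × Fin n) (Fin k × Fin n) ℂ, M.PosSemidef →
          (Matrix.of fun p q : Fin k × Fin m =>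
            S (Matrix.of fun a b : Fin n => M (p.1, a) (q.1, b)) p.2 q.2).PosSemidef) ↔
      (∑ i : Fin n, ∑ j : Fin n,
        Matrix.kroneckerMap (· * ·) (Matrix.single i j (1 : ℂ))
          (S (Matrix.single i j (1 : ℂ))))ᵀ.PosSemidef) := by
  have hcp : (∀ k : ℕ, 1 ≤ k → ∀ M : Matrix (Fin k × Fin n) (Fin k × Fin n) ℂ, M.PosSemidef →
      (ampliation S (Fin k) M).PosSemidef) ↔ (choiMatrix S)ᵀ.PosSemidef := by
    rw [posSemidef_transpose_iff]
    exact ⟨fun h => choiMatrix_posSemidef_of_ampliation S (h n hn),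
      fun hS _ _ _ hM => ampliation_posSemidef_of_choiMatrix hS hM⟩
  refine ⟨⟨choiFunctional S, fun a b _ _ => choiFunctional_kronecker_transpose S a b,
    fun _ => eq_choiFunctional_of_kronecker_transpose S⟩, fun S' hS' => ?_, hcp⟩
  rw [eq_choiFunctional_of_kronecker_transpose S hS', ← choiMatrix_transpose_posSemidef_iff]
  exact hcp

/-- Finite-dimensional complete positivity.  For a Hermitian-preserving
(complex-)linear map `S` from `n×n` to `m×m` complex matrices:
(a) there is a unique linear functional `S'` on `(nm)×(nm)` matrices with
`S'(a ⊗ bᵀ) = tr(S(a)·b)` for Hermitian `a`, `b`;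
(b) `S` is completely positive iff any such `S'` takes nonnegative real values on
positive semidefinite matrices;
(c) `S` is completely positive iff the transpose of the Choi matrix
`Σ_{i,j} E_{ij} ⊗ S(E_{ij})` is positive semidefinite. -/
theorem stmt9 (n m : ℕ) (hn : 1 ≤ n) (hm : 1 ≤ m)
    (S : Matrix (Fin n) (Fin n) ℂ →ₗ[ℂ] Matrix (Fin m) (Fin m) ℂ)
    (hS : ∀ a : Matrix (Fin n) (Fin n) ℂ, a.IsHermitian → (S a).IsHermitian) :
    (∃! S' : Matrix (Fin n × Fin m) (Fin n × Fin m) ℂ →ₗ[ℂ] ℂ,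
      ∀ (a : Matrix (Fin n) (Fin n) ℂ) (b : Matrix (Fin m) (Fin m) ℂ),
        a.IsHermitian → b.IsHermitian →
        S' (Matrix.kroneckerMap (· * ·) a bᵀ) = Matrix.trace (S a * b)) ∧
    (∀ S' : Matrix (Fin n × Fin m) (Fin n × Fin m) ℂ →ₗ[ℂ] ℂ,
      (∀ (a : Matrix (Fin n) (Fin n) ℂ) (b : Matrix (Fin m) (Fin m) ℂ),
        a.IsHermitian → b.IsHermitian →
        S' (Matrix.kroneckerMap (· * ·) a bᵀ) = Matrix.trace (S a * b)) →
      ((∀ k : ℕ, 1 ≤ k →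
          ∀ M : Matrix (Fin k × Fin n) (Fin k × Fin n) ℂ, M.PosSemidef →
            (Matrix.of fun p q : Fin k × Fin m =>
              S (Matrix.of fun a b : Fin n => M (p.1, a) (q.1, b)) p.2 q.2).PosSemidef) ↔
        (∀ T : Matrix (Fin n × Fin m) (Fin n × Fin m) ℂ, T.PosSemidef →
          ∃ r : ℝ, 0 ≤ r ∧ S' T = (r : ℂ)))) ∧
    ((∀ k : ℕ, 1 ≤ k →
        ∀ M : Matrix (Fin k × Fin n) (Fin k × Fin n) ℂ, M.PosSemidef →
          (Matrix.of fun p q : Fin k × Fin m =>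
            S (Matrix.of fun a b : Fin n => M (p.1, a) (q.1, b)) p.2 q.2).PosSemidef) ↔
      (∑ i : Fin n, ∑ j : Fin n,
        Matrix.kroneckerMap (· * ·) (Matrix.single i j (1 : ℂ))
          (S (Matrix.single i j (1 : ℂ))))ᵀ.PosSemidef) :=
  stmt9_general n m hn S
end

section
/- Let H₁ and H be finite-dimensional complex Hilbert spaces and let ρ : H₁ ⊗ H ⊗ H* → ℂ be a linear map, where H* is the dual space of H. Fix an orthonormal basis (ζ_l) of H with dual basis (ζ_l^*), and define ρ₁ : H₁ → ℂ by ρ₁(ψ) = Σ_l ρ(ψ ⊗ ζ_l ⊗ ζ_l^*). For a linear functional f on a finite-dimensional Hilbert space K and an operator T on K define A_f(T) := Σ_k conj(f(e_k)) f(T e_k) over an orthonormal basis (e_k) of K (this is independent of the basis). Then for every self-adjoint operator σ on H₁ and every orthonormal basis (ξ_j) of the real Hilbert space of self-adjoint operators on H with the Hilbert–Schmidt inner product ⟨A, B⟩ = tr(AB), one has A_{ρ₁}(σ) = Σ_j A_ρ(σ ⊗ ξ_j ⊗ ξ_j'), where ξ_j' denotes the dual (transpose) operator of ξ_j acting on H*.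 -/
/-!
Expanding `ρ` in the basis `ζ`, the coefficients that appear after summing over `j` are
`Σ_j ⟪ζ_p, ξ_j ζ_a⟫ ⟪ξ_j ζ_b, ζ_q⟫`, the Hilbert–Schmidt pairings of the rank-one operators
`|ζ_a⟩⟨ζ_p|` and `|ζ_q⟩⟨ζ_b|` against the basis `ξ`. Parseval's identity, which extends from
self-adjoint to arbitrary operators by splitting into real and imaginary parts, turns them into
`tr (|ζ_a⟩⟨ζ_p|ζ_q⟩⟨ζ_b|) = δ_pq δ_ab`. Hence `Σ_j ρ(ψ, ξ_j ζ_a, ξ_j ζ_b) = δ_ab ρ₁(ψ)`, and the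
sum over `a, b` collapses to `conj ρ₁(e_k) · ρ₁(σ e_k)`.
-/

open scoped ComplexInnerProductSpace

open LinearMap InnerProductSpace

lemma LinearMap.trace_comp_rankOne {𝕜 E : Type*} [RCLike 𝕜] [NormedAddCommGroup E]
    [InnerProductSpace 𝕜 E] [FiniteDimensional 𝕜 E] (f : E →ₗ[𝕜] E) (x y : E) :
    trace 𝕜 E (f ∘ₗ (rankOne 𝕜 x y).toLinearMap) = inner 𝕜 y (f x) := by
  have : f ∘ₗ (rankOne 𝕜 x y).toLinearMap = (rankOne 𝕜 (f x) y).toLinearMap := by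
    ext z
    simp
  rw [this, trace_rankOne]

lemma OrthonormalBasis.sesqForm_apply_eq_sum {H ι : Type*} [NormedAddCommGroup H]
    [InnerProductSpace ℂ H] [Fintype ι] (ζ : OrthonormalBasis ι ℂ H)
    (B : H →ₗ[ℂ] H →ₗ⋆[ℂ] ℂ) (x y : H) :
    B x y = ∑ p, ∑ q, ⟪ζ p, x⟫ * ⟪y, ζ q⟫ * B (ζ p) (ζ q) := by
  conv_lhs => rw [← ζ.sum_repr' x, ← ζ.sum_repr' y]
  simp only [map_sum, map_smul, map_smulₛₗ, LinearMap.sum_apply, LinearMap.smul_apply,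
    smul_eq_mul, Finset.mul_sum, inner_conj_symm]
  rw [Finset.sum_comm]
  exact Finset.sum_congr rfl fun p _ => Finset.sum_congr rfl fun q _ => by ring

/-- An orthonormal basis of the real space of self-adjoint operators on `H` for the
Hilbert–Schmidt inner product `⟨A, B⟩ = tr (A B)`. -/
structure IsHSOrthonormalBasis {H J : Type*} [NormedAddCommGroup H] [InnerProductSpace ℂ H]
    [DecidableEq J] (ξ : J → (H →ₗ[ℂ] H)) : Prop where
  isSymmetric : ∀ j, (ξ j).IsSymmetric
  trace_comp : ∀ j j', trace ℂ H (ξ j ∘ₗ ξ j') = if j = j' then (1 : ℂ) else 0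
  mem_span : ∀ T : H →ₗ[ℂ] H, T.IsSymmetric → T ∈ Submodule.span ℝ (Set.range ξ)

namespace IsHSOrthonormalBasis

variable {H J : Type*} [NormedAddCommGroup H] [InnerProductSpace ℂ H]
  [Fintype J] [DecidableEq J] {ξ : J → (H →ₗ[ℂ] H)}

lemma sum_trace_comp_mul_trace_comp_of_isSymmetric (hξ : IsHSOrthonormalBasis ξ)
    (S : H →ₗ[ℂ] H) {T : H →ₗ[ℂ] H} (hT : T.IsSymmetric) :
    ∑ j, trace ℂ H (ξ j ∘ₗ S) * trace ℂ H (ξ j ∘ₗ T) = trace ℂ H (S ∘ₗ T) := by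
  obtain ⟨c, rfl⟩ := (Submodule.mem_span_range_iff_exists_fun ℝ).mp (hξ.mem_span T hT)
  have hortho := hξ.trace_comp
  simp only [← Module.End.mul_eq_comp] at hortho ⊢
  have hcoef : ∀ j, trace ℂ H (ξ j * ∑ j', c j' • ξ j') = c j := by
    intro j
    simp [Finset.mul_sum, map_smul_of_tower, hortho, Complex.real_smul]
  rw [Finset.mul_sum, map_sum]
  refine Finset.sum_congr rfl fun j _ => ?_
  rw [hcoef, mul_smul_comm, map_smul_of_tower, trace_mul_comm ℂ S, Complex.real_smul, mul_comm]

lemma sum_trace_comp_mul_trace_comp [FiniteDimensional ℂ H] (hξ : IsHSOrthonormalBasis ξ)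
    (S T : H →ₗ[ℂ] H) :
    ∑ j, trace ℂ H (ξ j ∘ₗ S) * trace ℂ H (ξ j ∘ₗ T) = trace ℂ H (S ∘ₗ T) := by
  have hsymm : ∀ A : selfAdjoint (H →ₗ[ℂ] H), (A : H →ₗ[ℂ] H).IsSymmetric := fun A =>
    (isSymmetric_iff_isSelfAdjoint _).mpr A.2
  rw [← realPart_add_I_smul_imaginaryPart T]
  simp only [comp_add, comp_smul, map_add, map_smul, smul_eq_mul, mul_add,
    mul_left_comm _ Complex.I, Finset.sum_add_distrib, ← Finset.mul_sum,
    hξ.sum_trace_comp_mul_trace_comp_of_isSymmetric S (hsymm _)]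

lemma sum_inner_mul_inner [FiniteDimensional ℂ H] (hξ : IsHSOrthonormalBasis ξ)
    (w x y z : H) :
    ∑ j, ⟪w, ξ j x⟫ * ⟪ξ j y, z⟫ = ⟪w, z⟫ * ⟪y, x⟫ := by
  have h := hξ.sum_trace_comp_mul_trace_comp (rankOne ℂ x w) (rankOne ℂ z y)
  simp only [trace_comp_rankOne, ContinuousLinearMap.coe_coe, rankOne_apply,
    inner_smul_right] at h
  simpa only [hξ.isSymmetric _ y] using h

lemma sum_sesqForm_apply_apply [FiniteDimensional ℂ H] (hξ : IsHSOrthonormalBasis ξ)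
    {ι : Type*} [Fintype ι] (ζ : OrthonormalBasis ι ℂ H) (B : H →ₗ[ℂ] H →ₗ⋆[ℂ] ℂ) (x y : H) :
    ∑ j, B (ξ j x) (ξ j y) = ⟪y, x⟫ * ∑ l, B (ζ l) (ζ l) := by
  classical
  calc ∑ j, B (ξ j x) (ξ j y)
      = ∑ p, ∑ q, (∑ j, ⟪ζ p, ξ j x⟫ * ⟪ξ j y, ζ q⟫) * B (ζ p) (ζ q) := by
        simp only [ζ.sesqForm_apply_eq_sum B (ξ _ x), Finset.sum_mul]
        rw [Finset.sum_comm]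
        exact Finset.sum_congr rfl fun p _ => Finset.sum_comm
    _ = ∑ p, ∑ q, ⟪ζ p, ζ q⟫ * ⟪y, x⟫ * B (ζ p) (ζ q) := by
        simp only [hξ.sum_inner_mul_inner]
    _ = ⟪y, x⟫ * ∑ l, B (ζ l) (ζ l) := by
        simp [orthonormal_iff_ite.mp ζ.orthonormal, Finset.mul_sum]

end IsHSOrthonormalBasis

theorem stmt13_general (H₁ H : Type*)
    [NormedAddCommGroup H₁] [InnerProductSpace ℂ H₁]
    [NormedAddCommGroup H] [InnerProductSpace ℂ H] [FiniteDimensional ℂ H]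
    (ι₁ ι : Type*) [Fintype ι₁] [Fintype ι]
    (e : OrthonormalBasis ι₁ ℂ H₁) (ζ : OrthonormalBasis ι ℂ H)
    (ρ : H₁ →ₗ[ℂ] H →ₗ[ℂ] (H →ₛₗ[starRingEnd ℂ] ℂ))
    (σ : H₁ →ₗ[ℂ] H₁)
    (J : Type*) [Fintype J] [DecidableEq J] (ξ : J → (H →ₗ[ℂ] H))
    (hξsa : ∀ j, (ξ j).IsSymmetric)
    (hortho : ∀ j j' : J,
      LinearMap.trace ℂ H (ξ j ∘ₗ ξ j') = if j = j' then (1 : ℂ) else 0)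
    (hspan : ∀ T : H →ₗ[ℂ] H, T.IsSymmetric → T ∈ Submodule.span ℝ (Set.range ξ)) :
    (∑ k : ι₁, (starRingEnd ℂ) (∑ l : ι, ρ (e k) (ζ l) (ζ l)) *
        (∑ l : ι, ρ (σ (e k)) (ζ l) (ζ l))) =
      ∑ j : J, ∑ k : ι₁, ∑ a : ι, ∑ b : ι,
        (starRingEnd ℂ) (ρ (e k) (ζ a) (ζ b)) *
          ρ (σ (e k)) (ξ j (ζ a)) (ξ j (ζ b)) := by
  classical
  have hξ : IsHSOrthonormalBasis ξ := ⟨hξsa, hortho, hspan⟩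
  rw [Finset.sum_comm]
  refine Finset.sum_congr rfl fun k _ => ?_
  calc _ = ∑ a, ∑ b, (starRingEnd ℂ) (ρ (e k) (ζ a) (ζ b)) * (⟪ζ b, ζ a⟫ *
          ∑ l, ρ (σ (e k)) (ζ l) (ζ l)) := by
        simp [orthonormal_iff_ite.mp ζ.orthonormal, Finset.sum_mul]
    _ = ∑ a, ∑ b, ∑ j, (starRingEnd ℂ) (ρ (e k) (ζ a) (ζ b)) *
          ρ (σ (e k)) (ξ j (ζ a)) (ξ j (ζ b)) := by
        refine Finset.sum_congr rfl fun a _ => Finset.sum_congr rfl fun b _ => ?_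
        rw [← Finset.mul_sum, hξ.sum_sesqForm_apply_apply ζ]
    _ = _ := by
        symm
        rw [Finset.sum_comm]
        exact Finset.sum_congr rfl fun a _ => Finset.sum_comm

/-- Gluing identity for probability maps (finite dimensions).
The boundary space `H₁ ⊗ H ⊗ H*` is encoded by a map `ρ` linear in the `H₁`- and
`H`-slots and conjugate-linear in the slot corresponding to `H*` (a dual vector `χ^*`
corresponds to `χ`).  With `ρ₁(ψ) = Σ_l ρ(ψ ⊗ ζ_l ⊗ ζ_l^*)`, a self-adjoint `σ` on `H₁`,
and `(ξ_j)` an orthonormal basis of the real Hilbert space of self-adjoint operators on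
`H` with the Hilbert–Schmidt inner product, the probability maps satisfy
`A_{ρ₁}(σ) = Σ_j A_ρ(σ ⊗ ξ_j ⊗ ξ_j')` (the right-hand `A_ρ` being computed in the
product orthonormal basis, and `ξ_j' (χ^*) = (ξ_j χ)^*` for self-adjoint `ξ_j`). -/
theorem stmt13 (H₁ H : Type*)
    [NormedAddCommGroup H₁] [InnerProductSpace ℂ H₁] [FiniteDimensional ℂ H₁]
    [NormedAddCommGroup H] [InnerProductSpace ℂ H] [FiniteDimensional ℂ H]
    (ι₁ ι : Type*) [Fintype ι₁] [Fintype ι]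
    (e : OrthonormalBasis ι₁ ℂ H₁) (ζ : OrthonormalBasis ι ℂ H)
    (ρ : H₁ →ₗ[ℂ] H →ₗ[ℂ] (H →ₛₗ[starRingEnd ℂ] ℂ))
    (σ : H₁ →ₗ[ℂ] H₁) (hσ : LinearMap.IsSymmetric σ)
    (J : Type*) [Fintype J] [DecidableEq J] (ξ : J → (H →ₗ[ℂ] H))
    (hξsa : ∀ j, (ξ j).IsSymmetric)
    (hortho : ∀ j j' : J,
      LinearMap.trace ℂ H (ξ j ∘ₗ ξ j') = if j = j' then (1 : ℂ) else 0)
    (hspan : ∀ T : H →ₗ[ℂ] H, T.IsSymmetric → T ∈ Submodule.span ℝ (Set.range ξ)) :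
    (∑ k : ι₁, (starRingEnd ℂ) (∑ l : ι, ρ (e k) (ζ l) (ζ l)) *
        (∑ l : ι, ρ (σ (e k)) (ζ l) (ζ l))) =
      ∑ j : J, ∑ k : ι₁, ∑ a : ι, ∑ b : ι,
        (starRingEnd ℂ) (ρ (e k) (ζ a) (ζ b)) *
          ρ (σ (e k)) (ξ j (ζ a)) (ξ j (ζ b)) :=
  stmt13_general H₁ H ι₁ ι e ζ ρ σ J ξ hξsa hortho hspan
end

section
/- Let H be a finite-dimensional complex Hilbert space, U a unitary operator on H, and ψ, η ∈ H unit vectors. On the boundary space W = H ⊗ H* define the linear map ρ by ρ(φ ⊗ χ^*) = ⟨χ, U φ⟩, where χ^* = ⟨χ, ·⟩ ∈ H*. Let S = {ψ ⊗ χ^* : χ ∈ H} and A = ℂ·(ψ ⊗ η^*), and let (ζ_k)_{k∈I} be an orthonormal basis of W that restricts for a subset J ⊆ I to an orthonormal basis of S and for a subset K ⊆ J to an orthonormal basis of A. Then Σ_{k∈J} |ρ(ζ_k)|² = 1 and Σ_{k∈K} |ρ(ζ_k)|² = |⟨η, U ψ⟩|²; consequently the boundary-measurement probability Π(A|S) =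 (Σ_{k∈K} |ρ(ζ_k)|²)/(Σ_{k∈J} |ρ(ζ_k)|²) equals the standard transition probability |⟨η, U ψ⟩|². -/
open scoped ComplexInnerProductSpace

private lemma helper {W ι : Type*} [NormedAddCommGroup W] [InnerProductSpace ℂ W] [Fintype ι]
    (ζ : OrthonormalBasis ι ℂ W) (J : Finset ι) (u : W)
    (hu : u ∈ Submodule.span ℂ ((fun k => ζ k) '' ↑J)) :
    ∑ k ∈ J, ‖(⟪ζ k, u⟫ : ℂ)‖ ^ 2 = ‖u‖ ^ 2 := by
  have h0 : ∀ k ∉ J, ⟪ζ k, u⟫ = (0 : ℂ) := by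
    intro k hk
    have hle : Submodule.span ℂ ((fun j => ζ j) '' ↑J) ≤
        LinearMap.ker ((innerSL ℂ (ζ k)).toLinearMap) := by
      rw [Submodule.span_le]
      rintro x ⟨j, hj, rfl⟩
      simp only [SetLike.mem_coe, LinearMap.mem_ker, ContinuousLinearMap.coe_coe, innerSL_apply_apply]
      exact ζ.orthonormal.2 (fun h => hk (h ▸ hj))
    simpa using hle hu
  have key : ∑ k ∈ J, (⟪u, ζ k⟫ * ⟪ζ k, u⟫ : ℂ) = ⟪u, u⟫ := by
    rw [← ζ.sum_inner_mul_inner u u,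
        ← Finset.sum_subset (Finset.subset_univ J) (by intro k _ hk; rw [h0 k hk]; simp)]
  calc ∑ k ∈ J, ‖(⟪ζ k, u⟫ : ℂ)‖ ^ 2
      = RCLike.re (∑ k ∈ J, (⟪u, ζ k⟫ * ⟪ζ k, u⟫ : ℂ)) := by
        rw [map_sum]
        refine Finset.sum_congr rfl fun k _ => ?_
        rw [← inner_conj_symm u (ζ k), RCLike.conj_mul]
        simp [← Complex.ofReal_pow]
    _ = RCLike.re (⟪u, u⟫ : ℂ) := by rw [key]
    _ = ‖u‖ ^ 2 := inner_self_eq_norm_sq u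

/-- The boundary-measurement probability reproduces the standard
transition probability.  The boundary space `W = H ⊗ H*` is presented via a map `t`
linear in the first slot and conjugate-linear in the second (`t φ χ = φ ⊗ χ^*`), with
`⟨t φ χ, t φ' χ'⟩ = ⟨φ, φ'⟩·⟨χ', χ⟩` and dense (here: full) span.  With
`ρ(φ ⊗ χ^*) = ⟨χ, U φ⟩`, `S = {ψ ⊗ χ^* : χ ∈ H}`, `A = ℂ·(ψ ⊗ η^*)` and an orthonormal
basis `ζ` of `W` adapted to `A ⊆ S` via `K ⊆ J`, one has `Σ_{k∈J} |ρ(ζ_k)|² = 1`,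
`Σ_{k∈K} |ρ(ζ_k)|² = |⟨η, U ψ⟩|²`, and hence `Π(A|S) = |⟨η, U ψ⟩|²`. -/
theorem stmt14 (H W : Type*)
    [NormedAddCommGroup H] [InnerProductSpace ℂ H] [FiniteDimensional ℂ H]
    [NormedAddCommGroup W] [InnerProductSpace ℂ W] [FiniteDimensional ℂ W]
    (t : H →ₗ[ℂ] (H →ₛₗ[starRingEnd ℂ] W))
    (ht : ∀ φ χ φ' χ' : H, ⟪t φ χ, t φ' χ'⟫ = ⟪φ, φ'⟫ * ⟪χ', χ⟫)
    (hspan : Submodule.span ℂ {w : W | ∃ φ χ, w = t φ χ} = ⊤)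
    (U : H →ₗ[ℂ] H) (hU : ∀ x y : H, ⟪U x, U y⟫ = ⟪x, y⟫)
    (ψ η : H) (hψ : ‖ψ‖ = 1) (hη : ‖η‖ = 1)
    (ρ : W →ₗ[ℂ] ℂ) (hρ : ∀ φ χ : H, ρ (t φ χ) = ⟪χ, U φ⟫)
    (ι : Type*) [Fintype ι] (ζ : OrthonormalBasis ι ℂ W)
    (J K : Finset ι) (hKJ : K ⊆ J)
    (hJ : Submodule.span ℂ ((fun k => ζ k) '' ↑J) =
      Submodule.span ℂ (Set.range fun χ : H => t ψ χ))
    (hK : Submodule.span ℂ ((fun k => ζ k) '' ↑K) =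
      Submodule.span ℂ {t ψ η}) :
    (∑ k ∈ J, ‖ρ (ζ k)‖ ^ 2 = 1) ∧
    (∑ k ∈ K, ‖ρ (ζ k)‖ ^ 2 = ‖⟪η, U ψ⟫‖ ^ 2) ∧
    (∑ k ∈ K, ‖ρ (ζ k)‖ ^ 2) / (∑ k ∈ J, ‖ρ (ζ k)‖ ^ 2) = ‖⟪η, U ψ⟫‖ ^ 2 := by
  have hψψ : ⟪ψ, ψ⟫ = (1 : ℂ) := by
    rw [inner_self_eq_norm_sq_to_K, hψ]; norm_num
  have hηη : ⟪η, η⟫ = (1 : ℂ) := by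
    rw [inner_self_eq_norm_sq_to_K, hη]; norm_num
  set u : W := t ψ (U ψ) with hu_def
  set v : W := t ψ η with hv_def
  -- ρ agrees with ⟪u, ·⟫ on S
  have hρu : ∀ x ∈ Submodule.span ℂ (Set.range fun χ : H => t ψ χ), ρ x = ⟪u, x⟫ := by
    intro x hx
    have hle : Submodule.span ℂ (Set.range fun χ : H => t ψ χ) ≤
        LinearMap.ker (ρ - (innerSL ℂ u).toLinearMap) := by
      rw [Submodule.span_le]
      rintro _ ⟨χ, rfl⟩
      simp only [SetLike.mem_coe, LinearMap.mem_ker, LinearMap.sub_apply,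
        ContinuousLinearMap.coe_coe, innerSL_apply_apply]
      rw [hρ, ht, hψψ, one_mul, sub_self]
    have := hle hx
    rw [LinearMap.mem_ker, LinearMap.sub_apply] at this
    simpa [sub_eq_zero] using this
  have hJmem : ∀ k ∈ J, ρ (ζ k) = ⟪u, ζ k⟫ := fun k hk =>
    hρu _ (hJ ▸ Submodule.subset_span ⟨k, hk, rfl⟩)
  have huS : u ∈ Submodule.span ℂ ((fun k => ζ k) '' ↑J) := by
    rw [hJ]; exact Submodule.subset_span ⟨U ψ, rfl⟩
  have hnu : ‖u‖ ^ 2 = 1 := by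
    rw [← inner_self_eq_norm_sq (𝕜 := ℂ)]
    rw [hu_def, ht, hU, hψψ, one_mul]
    simp
  have hsumJ : ∑ k ∈ J, ‖ρ (ζ k)‖ ^ 2 = 1 := by
    calc ∑ k ∈ J, ‖ρ (ζ k)‖ ^ 2 = ∑ k ∈ J, ‖(⟪ζ k, u⟫ : ℂ)‖ ^ 2 := by
          refine Finset.sum_congr rfl fun k hk => ?_
          rw [hJmem k hk, ← inner_conj_symm u (ζ k), RCLike.norm_conj]
      _ = ‖u‖ ^ 2 := helper ζ J u huS
      _ = 1 := hnu
  -- the K part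
  set c : ℂ := ⟪U ψ, η⟫ with hc_def
  set u' : W := c • v with hu'_def
  have hvv : ⟪v, v⟫ = (1 : ℂ) := by rw [hv_def, ht, hψψ, hηη, one_mul]
  have hnv : ‖v‖ = 1 := by
    have h2 : ‖v‖ ^ 2 = 1 := by
      rw [← inner_self_eq_norm_sq (𝕜 := ℂ), hvv]; simp
    nlinarith [norm_nonneg v]
  have huv : ⟪u, v⟫ = ⟪η, U ψ⟫ := by
    rw [hu_def, hv_def, ht, hψψ, one_mul]
  have hvu' : ⟪v, u'⟫ = c := by
    rw [hu'_def, inner_smul_right, hvv, mul_one]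
  have hu'K : u' ∈ Submodule.span ℂ ((fun k => ζ k) '' ↑K) := by
    rw [hK]
    exact Submodule.smul_mem _ c (Submodule.subset_span rfl)
  have hterm : ∀ k ∈ K, ‖ρ (ζ k)‖ = ‖(⟪ζ k, u'⟫ : ℂ)‖ := by
    intro k hk
    obtain ⟨a, ha⟩ := Submodule.mem_span_singleton.mp
      (hK ▸ Submodule.subset_span ⟨k, hk, rfl⟩ :
        ζ k ∈ Submodule.span ℂ {t ψ η})
    have h1 : ρ (ζ k) = a * ⟪η, U ψ⟫ := by
      rw [hJmem k (hKJ hk), ← ha, inner_smul_right, huv]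
    have h2 : ⟪ζ k, u'⟫ = (starRingEnd ℂ) a * c := by
      rw [← ha, inner_smul_left, hvu']
    rw [h1, h2, norm_mul, norm_mul, RCLike.norm_conj, hc_def,
      ← inner_conj_symm η (U ψ), RCLike.norm_conj]
  have hnu' : ‖u'‖ ^ 2 = ‖(⟪η, U ψ⟫ : ℂ)‖ ^ 2 := by
    rw [hu'_def, norm_smul, hnv, mul_one, hc_def,
      ← inner_conj_symm η (U ψ), RCLike.norm_conj]
  have hsumK : ∑ k ∈ K, ‖ρ (ζ k)‖ ^ 2 = ‖(⟪η, U ψ⟫ : ℂ)‖ ^ 2 := by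
    calc ∑ k ∈ K, ‖ρ (ζ k)‖ ^ 2 = ∑ k ∈ K, ‖(⟪ζ k, u'⟫ : ℂ)‖ ^ 2 := by
          refine Finset.sum_congr rfl fun k hk => ?_
          rw [hterm k hk]
      _ = ‖u'‖ ^ 2 := helper ζ K u' hu'K
      _ = ‖(⟪η, U ψ⟫ : ℂ)‖ ^ 2 := hnu'
  exact ⟨hsumJ, hsumK, by rw [hsumJ, hsumK, div_one]⟩
end

section
/- Let H be a finite-dimensional complex Hilbert space and Ô a linear operator on H. On W = H ⊗ H* define the linear maps ρ and O by ρ(φ ⊗ χ^*) = ⟨χ, φ⟩ and O(φ ⊗ χ^*) = ⟨χ, Ô φ⟩, where χ^* = ⟨χ, ·⟩ ∈ H*. For a subspace S ⊆ W with orthogonal projection P_S and an orthonormal basis (ζ_k) of W, define the generalized expectation value ⟨O⟩_S := (Σ_k O(P_S ζ_k) · conj(ρ(ζ_k))) / (Σ_k ρ(P_S ζ_k) · conj(ρ(ζ_k))). Then for a unit vector ψ ∈ H and S = {ψ ⊗ χ^* : χ ∈ H}, the denominator equals 1 and ⟨O⟩_S = ⟨ψ, Ô ψ⟩. -/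
open scoped ComplexInnerProductSpace

/-- The generalized expectation value of a slice observable with
initial-state knowledge reproduces the standard expectation value.  `W = H ⊗ H*` is
presented via `t` (linear/conjugate-linear) as in the boundary formalism, with slice
amplitude `ρ(φ ⊗ χ^*) = ⟨χ, φ⟩` and observable map `O(φ ⊗ χ^*) = ⟨χ, Ohat φ⟩`.  `PS` is the
orthogonal projection onto `S = {ψ ⊗ χ^* : χ ∈ H}` (characterized by range, fixing `S`,
and orthogonality of `w - PS w` to `S`).  Then the denominator
`Σ_k ρ(PS ζ_k) conj(ρ(ζ_k))` equals `1` and `⟨O⟩_S = ⟨ψ, Ohat ψ⟩`. -/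
theorem stmt15 (H W : Type*)
    [NormedAddCommGroup H] [InnerProductSpace ℂ H] [FiniteDimensional ℂ H]
    [NormedAddCommGroup W] [InnerProductSpace ℂ W] [FiniteDimensional ℂ W]
    (t : H →ₗ[ℂ] (H →ₛₗ[starRingEnd ℂ] W))
    (ht : ∀ φ χ φ' χ' : H, ⟪t φ χ, t φ' χ'⟫ = ⟪φ, φ'⟫ * ⟪χ', χ⟫)
    (hspan : Submodule.span ℂ {w : W | ∃ φ χ, w = t φ χ} = ⊤)
    (Ohat : H →ₗ[ℂ] H)
    (ρ O : W →ₗ[ℂ] ℂ)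
    (hρ : ∀ φ χ : H, ρ (t φ χ) = ⟪χ, φ⟫)
    (hO : ∀ φ χ : H, O (t φ χ) = ⟪χ, Ohat φ⟫)
    (ψ : H) (hψ : ‖ψ‖ = 1)
    (PS : W →ₗ[ℂ] W)
    (hPS₁ : ∀ w : W, PS w ∈ Submodule.span ℂ (Set.range fun χ : H => t ψ χ))
    (hPS₂ : ∀ w ∈ Submodule.span ℂ (Set.range fun χ : H => t ψ χ), PS w = w)
    (hPS₃ : ∀ w : W, ∀ u ∈ Submodule.span ℂ (Set.range fun χ : H => t ψ χ),
      ⟪u, w - PS w⟫ = 0)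
    (ι : Type*) [Fintype ι] (ζ : OrthonormalBasis ι ℂ W) :
    (∑ k : ι, ρ (PS (ζ k)) * (starRingEnd ℂ) (ρ (ζ k)) = 1) ∧
    (∑ k : ι, O (PS (ζ k)) * (starRingEnd ℂ) (ρ (ζ k))) /
        (∑ k : ι, ρ (PS (ζ k)) * (starRingEnd ℂ) (ρ (ζ k))) = ⟪ψ, Ohat ψ⟫ := by
  classical
  set e := stdOrthonormalBasis ℂ H with he
  set v : W := ∑ i, t (e i) (e i) with hv
  have hψψ : ⟪ψ, ψ⟫ = (1 : ℂ) := by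
    rw [inner_self_eq_norm_sq_to_K, hψ]; norm_num
  -- v is the Riesz representative of ρ
  have hρv : ∀ w : W, ⟪v, w⟫ = ρ w := by
    intro w
    have hmem : w ∈ Submodule.span ℂ {w : W | ∃ φ χ, w = t φ χ} := by
      rw [hspan]; exact Submodule.mem_top
    induction hmem using Submodule.span_induction with
    | mem x hx =>
      obtain ⟨φ, χ, rfl⟩ := hx
      rw [hρ, hv, sum_inner]
      simp only [ht]
      calc ∑ i, ⟪e i, φ⟫ * ⟪χ, e i⟫ = ∑ i, ⟪χ, e i⟫ * ⟪e i, φ⟫ := by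
            simp [mul_comm]
        _ = ⟪χ, φ⟫ := e.sum_inner_mul_inner χ φ
    | zero => simp
    | add x y _ _ hx hy => rw [inner_add_right, map_add, hx, hy]
    | smul c x _ hx => rw [inner_smul_right, map_smul, hx]; rfl
  -- the key sum identity
  have hsum : ∀ f : W →ₗ[ℂ] ℂ,
      ∑ k : ι, f (PS (ζ k)) * (starRingEnd ℂ) (ρ (ζ k)) = f (PS v) := by
    intro f
    have hc : ∀ k, (starRingEnd ℂ) (ρ (ζ k)) = ⟪ζ k, v⟫ := by
      intro k; rw [← hρv, inner_conj_symm]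
    have hvexp : ∑ k : ι, ⟪ζ k, v⟫ • ζ k = v := by
      have := ζ.sum_repr v
      simpa [OrthonormalBasis.repr_apply_apply] using this
    calc ∑ k : ι, f (PS (ζ k)) * (starRingEnd ℂ) (ρ (ζ k))
        = ∑ k : ι, f (PS (⟪ζ k, v⟫ • ζ k)) := by
          simp [hc, map_smul, smul_eq_mul, mul_comm]
      _ = f (PS (∑ k : ι, ⟪ζ k, v⟫ • ζ k)) := by rw [map_sum, map_sum]
      _ = f (PS v) := by rw [hvexp]
  -- orthogonality of v - t ψ ψ to S
  have horth : ∀ u ∈ Submodule.span ℂ (Set.range fun χ : H => t ψ χ),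
      ⟪u, v - t ψ ψ⟫ = 0 := by
    intro u hu
    induction hu using Submodule.span_induction with
    | mem x hx =>
      obtain ⟨χ, rfl⟩ := hx
      have h1 : ⟪t ψ χ, v⟫ = ⟪ψ, χ⟫ := by
        rw [← inner_conj_symm, hρv, hρ, inner_conj_symm]
      rw [inner_sub_right, h1, ht, hψψ, one_mul, sub_self]
    | zero => simp
    | add x y _ _ hx hy => rw [inner_add_left, hx, hy, add_zero]
    | smul c x _ hx => rw [inner_smul_left, hx, mul_zero]
  have hmemS : t ψ ψ ∈ Submodule.span ℂ (Set.range fun χ : H => t ψ χ) :=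
    Submodule.subset_span ⟨ψ, rfl⟩
  have hPSv : PS v = t ψ ψ := by
    have hu : PS v - t ψ ψ ∈ Submodule.span ℂ (Set.range fun χ : H => t ψ χ) :=
      Submodule.sub_mem _ (hPS₁ v) hmemS
    have e1 : PS v - t ψ ψ = (v - t ψ ψ) - (v - PS v) := by abel
    have h0 : ⟪PS v - t ψ ψ, PS v - t ψ ψ⟫ = 0 := by
      nth_rewrite 2 [e1]
      rw [inner_sub_right, horth _ hu, hPS₃ v _ hu, sub_zero]
    exact sub_eq_zero.mp (inner_self_eq_zero.mp h0)
  have hden : ∑ k : ι, ρ (PS (ζ k)) * (starRingEnd ℂ) (ρ (ζ k)) = 1 := by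
    rw [hsum ρ, hPSv, hρ, hψψ]
  refine ⟨hden, ?_⟩
  rw [hden, div_one, hsum O, hPSv, hO]
end

section
/- Let H be a finite-dimensional complex Hilbert space and Ô a linear operator on H. On W = H ⊗ H* define the linear maps ρ and O by ρ(φ ⊗ χ^*) = ⟨χ, φ⟩ and O(φ ⊗ χ^*) = ⟨χ, Ô φ⟩, where χ^* = ⟨χ, ·⟩ ∈ H*. For a subspace S ⊆ W with orthogonal projection P_S and an orthonormal basis (ζ_k) of W, define ⟨O⟩_S := (Σ_k O(P_S ζ_k) · conj(ρ(ζ_k))) / (Σ_k ρ(P_S ζ_k) · conj(ρ(ζ_k))). Then for unit vectors ψ, η ∈ H with ⟨η, ψ⟩ ≠ 0 and S the one-dimensional subspace ℂ·(ψ ⊗ η^*), one has ⟨O⟩_S = ⟨η, Ô ψ⟩ / ⟨η, ψ⟩, i.e., the generalized expectation value reproduces the weak value of Ô with pre-selection ψ and post-selection η. -/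
open scoped ComplexInnerProductSpace

/-- The generalized expectation value with pre-selection `ψ` and
post-selection `η` reproduces the weak value `⟨η, Ohat ψ⟩ / ⟨η, ψ⟩`.  Setup as in the slice
observable case: `W = H ⊗ H*` presented via `t`, slice amplitude
`ρ(φ ⊗ χ^*) = ⟨χ, φ⟩`, observable map `O(φ ⊗ χ^*) = ⟨χ, Ohat φ⟩`, and `PS` the orthogonal
projection onto the one-dimensional subspace `S = ℂ·(ψ ⊗ η^*)`. -/
theorem stmt16 (H W : Type*)
    [NormedAddCommGroup H] [InnerProductSpace ℂ H] [FiniteDimensional ℂ H]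
    [NormedAddCommGroup W] [InnerProductSpace ℂ W] [FiniteDimensional ℂ W]
    (t : H →ₗ[ℂ] (H →ₛₗ[starRingEnd ℂ] W))
    (ht : ∀ φ χ φ' χ' : H, ⟪t φ χ, t φ' χ'⟫ = ⟪φ, φ'⟫ * ⟪χ', χ⟫)
    (hspan : Submodule.span ℂ {w : W | ∃ φ χ, w = t φ χ} = ⊤)
    (Ohat : H →ₗ[ℂ] H)
    (ρ O : W →ₗ[ℂ] ℂ)
    (hρ : ∀ φ χ : H, ρ (t φ χ) = ⟪χ, φ⟫)
    (hO : ∀ φ χ : H, O (t φ χ) = ⟪χ, Ohat φ⟫)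
    (ψ η : H) (hψ : ‖ψ‖ = 1) (hη : ‖η‖ = 1) (hηψ : ⟪η, ψ⟫ ≠ 0)
    (PS : W →ₗ[ℂ] W)
    (hPS₁ : ∀ w : W, PS w ∈ Submodule.span ℂ ({t ψ η} : Set W))
    (hPS₂ : ∀ w ∈ Submodule.span ℂ ({t ψ η} : Set W), PS w = w)
    (hPS₃ : ∀ w : W, ∀ u ∈ Submodule.span ℂ ({t ψ η} : Set W), ⟪u, w - PS w⟫ = 0)
    (ι : Type*) [Fintype ι] (ζ : OrthonormalBasis ι ℂ W) :
    (∑ k : ι, O (PS (ζ k)) * (starRingEnd ℂ) (ρ (ζ k))) /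
        (∑ k : ι, ρ (PS (ζ k)) * (starRingEnd ℂ) (ρ (ζ k))) = ⟪η, Ohat ψ⟫ / ⟪η, ψ⟫ := by
  set v := t ψ η with hv
  have hψψ : ⟪ψ, ψ⟫ = 1 := by
    rw [inner_self_eq_norm_sq_to_K, hψ]; norm_num
  have hηη : ⟪η, η⟫ = 1 := by
    rw [inner_self_eq_norm_sq_to_K, hη]; norm_num
  have hvv : ⟪v, v⟫ = 1 := by rw [hv, ht, hψψ, hηη, one_mul]
  have hvmem : v ∈ Submodule.span ℂ ({v} : Set W) := Submodule.mem_span_singleton_self v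
  -- PS w = ⟪v, w⟫ • v
  have hPS : ∀ w : W, PS w = ⟪v, w⟫ • v := by
    intro w
    obtain ⟨c, hc⟩ := Submodule.mem_span_singleton.mp (hPS₁ w)
    have h3 := hPS₃ w v hvmem
    rw [inner_sub_right, sub_eq_zero] at h3
    rw [← hc, inner_smul_right, hvv, mul_one] at h3
    rw [← hc, ← h3]
  -- key sum identity
  have key : ∀ a : W, ∑ k, ⟪a, ζ k⟫ * (starRingEnd ℂ) (ρ (ζ k)) = (starRingEnd ℂ) (ρ a) := by
    intro a
    conv_rhs => rw [← ζ.sum_repr' a]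
    rw [map_sum, map_sum]
    refine Finset.sum_congr rfl fun k _ => ?_
    simp only [map_smul, smul_eq_mul, map_mul]
    rw [inner_conj_symm]
  have hnum : ∑ k, O (PS (ζ k)) * (starRingEnd ℂ) (ρ (ζ k))
      = ⟪η, Ohat ψ⟫ * (starRingEnd ℂ) ⟪η, ψ⟫ := by
    calc ∑ k, O (PS (ζ k)) * (starRingEnd ℂ) (ρ (ζ k))
        = ∑ k, O v * (⟪v, ζ k⟫ * (starRingEnd ℂ) (ρ (ζ k))) := by
          refine Finset.sum_congr rfl fun k _ => ?_
          rw [hPS, map_smul, smul_eq_mul]; ring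
      _ = O v * (starRingEnd ℂ) (ρ v) := by rw [← Finset.mul_sum, key]
      _ = ⟪η, Ohat ψ⟫ * (starRingEnd ℂ) ⟪η, ψ⟫ := by rw [hv, hO, hρ]
  have hden : ∑ k, ρ (PS (ζ k)) * (starRingEnd ℂ) (ρ (ζ k))
      = ⟪η, ψ⟫ * (starRingEnd ℂ) ⟪η, ψ⟫ := by
    calc ∑ k, ρ (PS (ζ k)) * (starRingEnd ℂ) (ρ (ζ k))
        = ∑ k, ρ v * (⟪v, ζ k⟫ * (starRingEnd ℂ) (ρ (ζ k))) := by
          refine Finset.sum_congr rfl fun k _ => ?_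
          rw [hPS, map_smul, smul_eq_mul]; ring
      _ = ρ v * (starRingEnd ℂ) (ρ v) := by rw [← Finset.mul_sum, key]
      _ = ⟪η, ψ⟫ * (starRingEnd ℂ) ⟪η, ψ⟫ := by rw [hv, hρ]
  rw [hnum, hden, mul_div_mul_right _ _ (fun h => hηψ (by simpa using congrArg (starRingEnd ℂ) h))]
end
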